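/- Let C be a triangulated category with a weight structure w. Suppose M ∈ C_{w≥0} admits a weight filtration M_{≤0} →ι M → M_{≥2} → M_{≤0}[1] avoiding weight 1 (i.e., M_{≤0} ∈ C_{w≤0} and M_{≥2} ∈ C_{w≥2}). Then: (i) M_{≤0} belongs to the heart C_{w=0}; (ii) for every object N of the heart C_{w=0}, postcomposition with ι induces a bijection Hom_C(N, M_{≤0}) → Hom_C(N, M). (Thus M ↦ M_{≤0} =: Gr_0 M is right adjoint to the inclusion of the heart into the full subcategory of objects of non-negative weights without weight 1.) -/

import Mathlib

open CategoryTheory CategoryTheory.Limits CategoryTheory.Pretriangulated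

universe v u

/-- The shift `S[n]` of a class of objects `S`: the objects isomorphic to `A⟦n⟧`
for some `A ∈ S`. -/
def shiftedSet {C : Type u} [Category.{v} C] [HasShift C ℤ] (S : Set C) (n : ℤ) : Set C :=
  {X | ∃ A ∈ S, Nonempty (X ≅ A⟦n⟧)}

/-- A weight structure on a pretriangulated category `C`, following Bondarko. -/
structure WeightStructure (C : Type u) [Category.{v} C] [Preadditive C] [HasZeroObject C]
    [HasShift C ℤ] [∀ n : ℤ, (shiftFunctor C n).Additive] [Pretriangulated C] where
  /-- the objects of weights `≤ 0` -/
  le : Set C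
  /-- the objects of weights `≥ 0` -/
  ge : Set C
  /-- `C_{w ≤ 0}` is closed under retracts -/
  retract_le : ∀ (X M : C) (i : X ⟶ M) (r : M ⟶ X), i ≫ r = 𝟙 X → M ∈ le → X ∈ le
  /-- `C_{w ≥ 0}` is closed under retracts -/
  retract_ge : ∀ (X M : C) (i : X ⟶ M) (r : M ⟶ X), i ≫ r = 𝟙 X → M ∈ ge → X ∈ ge
  /-- `C_{w ≤ 0} ⊆ C_{w ≤ 1}` -/
  le_shift : le ⊆ shiftedSet le 1
  /-- `C_{w ≥ 1} ⊆ C_{w ≥ 0}` -/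
  ge_shift : shiftedSet ge 1 ⊆ ge
  /-- orthogonality -/
  orth : ∀ (M N : C), M ∈ le → N ∈ shiftedSet ge 1 → ∀ f : M ⟶ N, f = 0
  /-- existence of weight filtrations -/
  exists_wf : ∀ M : C, ∃ (A B : C) (a : A ⟶ M) (b : M ⟶ B) (δ : B ⟶ A⟦(1:ℤ)⟧),
    Triangle.mk a b δ ∈ (distTriang C) ∧ A ∈ le ∧ B ∈ shiftedSet ge 1

namespace WeightStructure

variable {C : Type u} [Category.{v} C] [Preadditive C] [HasZeroObject C]
  [HasShift C ℤ] [∀ n : ℤ, (shiftFunctor C n).Additive] [Pretriangulated C]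

/-- `C_{w ≤ n} := C_{w ≤ 0}[n]`. -/
def wLE (w : WeightStructure C) (n : ℤ) : Set C := shiftedSet w.le n

/-- `C_{w ≥ n} := C_{w ≥ 0}[n]`. -/
def wGE (w : WeightStructure C) (n : ℤ) : Set C := shiftedSet w.ge n

/-- The heart `C_{w = 0} := C_{w ≤ 0} ∩ C_{w ≥ 0}`. -/
def heart (w : WeightStructure C) : Set C := w.le ∩ w.ge

/-- An object `M` is without weights `m, …, n` if it admits a weight filtration
avoiding these weights. -/
def WithoutWeights (w : WeightStructure C) (m n : ℤ) (M : C) : Prop :=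
  ∃ (A B : C) (a : A ⟶ M) (b : M ⟶ B) (δ : B ⟶ A⟦(1:ℤ)⟧),
    Triangle.mk a b δ ∈ (distTriang C) ∧ A ∈ w.wLE (m - 1) ∧ B ∈ w.wGE (n + 1)

end WeightStructure

/-!
For `N` of weights `≤ 0` both `Hom(N, B)` and `Hom(N, B[-1])` vanish, because `B` has weights
`≥ 2`; the exact `Hom(N, -)`-sequence of the triangle then makes composition with `ι` bijective.
The same exactness kills every map `X → G` with `X` of weights `≤ -1`: its composite to `M`
vanishes since `M` has weights `≥ 0`, so it factors through `B[-1]`, which has weights `≥ 1`.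
Finally `C_{w ≥ 0}` is the right orthogonal of `C_{w ≤ -1}`: if `Hom(A, Y) = 0` for the first
term `A → Y` of a weight decomposition of `Y`, then `Y` is a retract of its second term.
-/

section ShiftedSet

variable {C : Type u} [Category.{v} C] [HasShift C ℤ] {S : Set C}

lemma shift_mem_shiftedSet {A : C} (hA : A ∈ S) (n : ℤ) : A⟦n⟧ ∈ shiftedSet S n :=
  ⟨A, hA, ⟨Iso.refl _⟩⟩

lemma shift_mem_shiftedSet_add {X : C} {n : ℤ} (hX : X ∈ shiftedSet S n) (m : ℤ) :
    X⟦m⟧ ∈ shiftedSet S (n + m) := by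
  obtain ⟨A, hA, ⟨e⟩⟩ := hX
  exact ⟨A, hA, ⟨(shiftFunctor C m).mapIso e ≪≫ ((shiftFunctorAdd C n m).app A).symm⟩⟩

lemma mem_shiftedSet_of_retract (hS : ∀ X Y : C, Retract X Y → Y ∈ S → X ∈ S) {X Y : C}
    {n : ℤ} (h : Retract X Y) (hY : Y ∈ shiftedSet S n) : X ∈ shiftedSet S n := by
  obtain ⟨A, hA, ⟨e⟩⟩ := hY
  have hX : X⟦-n⟧ ∈ S := hS _ A ((h.map (shiftFunctor C (-n))).trans (Retract.ofIso
    ((shiftFunctor C (-n)).mapIso e ≪≫ (shiftFunctorCompIsoId C n (-n) (by omega)).app A))) hA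
  exact ⟨_, hX, ⟨((shiftFunctorCompIsoId C (-n) n (by omega)).app X).symm⟩⟩

end ShiftedSet

namespace CategoryTheory.Pretriangulated.Triangle

variable {C : Type u} [Category.{v} C] [Preadditive C] [HasZeroObject C]
  [HasShift C ℤ] [∀ n : ℤ, (CategoryTheory.shiftFunctor C n).Additive] [Pretriangulated C]

lemma comp_mor₁_injective {T : Triangle C} (hT : T ∈ distTriang C) (X : C)
    (h : ∀ g : X ⟶ T.invRotate.obj₁, g = 0) :
    Function.Injective (fun f : X ⟶ T.obj₁ => f ≫ T.mor₁) := by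
  intro f₁ f₂ hf
  have hf' : (f₁ - f₂) ≫ T.mor₁ = 0 := by rw [Preadditive.sub_comp, sub_eq_zero]; exact hf
  obtain ⟨g, hg⟩ := coyoneda_exact₂ T.invRotate (inv_rot_of_distTriang T hT) (f₁ - f₂) hf'
  rw [h g, zero_comp] at hg
  exact sub_eq_zero.mp hg

lemma comp_mor₁_surjective {T : Triangle C} (hT : T ∈ distTriang C) (X : C)
    (h : ∀ g : X ⟶ T.obj₃, g = 0) :
    Function.Surjective (fun f : X ⟶ T.obj₁ => f ≫ T.mor₁) := fun f =>
  (coyoneda_exact₂ T hT f (h _)).imp fun _ hg => hg.symm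

end CategoryTheory.Pretriangulated.Triangle

namespace WeightStructure

variable {C : Type u} [Category.{v} C] [Preadditive C] [HasZeroObject C]
  [HasShift C ℤ] [∀ n : ℤ, (shiftFunctor C n).Additive] [Pretriangulated C]
  (w : WeightStructure C)

lemma mem_wLE_zero {X : C} (hX : X ∈ w.le) : X ∈ w.wLE 0 :=
  ⟨X, hX, ⟨((shiftFunctorZero C ℤ).app X).symm⟩⟩

lemma mem_wGE_zero_iff {X : C} : X ∈ w.wGE 0 ↔ X ∈ w.ge := by
  refine ⟨fun ⟨A, hA, ⟨e⟩⟩ => ?_, fun hX => ⟨X, hX, ⟨((shiftFunctorZero C ℤ).app X).symm⟩⟩⟩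
  have r := Retract.ofIso (e ≪≫ (shiftFunctorZero C ℤ).app A)
  exact w.retract_ge X A r.i r.r r.retract hA

lemma mem_wGE_of_retract {X Y : C} {n : ℤ} (h : Retract X Y) (hY : Y ∈ w.wGE n) :
    X ∈ w.wGE n :=
  mem_shiftedSet_of_retract (fun X Y r => w.retract_ge X Y r.i r.r r.retract) h hY

lemma shift_mem_wGE {X : C} {n : ℤ} (hX : X ∈ w.wGE n) (m : ℤ) : X⟦m⟧ ∈ w.wGE (n + m) :=
  shift_mem_shiftedSet_add hX m

lemma wGE_add_one_subset (n : ℤ) : w.wGE (n + 1) ⊆ w.wGE n := fun _ ⟨B, hB, ⟨e⟩⟩ =>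
  ⟨B⟦(1 : ℤ)⟧, w.ge_shift (shift_mem_shiftedSet hB 1),
    ⟨e ≪≫ (shiftFunctorAdd' C 1 n (n + 1) (add_comm 1 n)).app B⟩⟩

lemma wGE_antitone : Antitone w.wGE := by
  intro m n hmn
  induction n, hmn using Int.leInduction with
  | base => exact le_rfl
  | succ n _ ih => exact (w.wGE_add_one_subset n).trans ih

lemma hom_eq_zero {X Y : C} {n m : ℤ} (hX : X ∈ w.wLE n) (hY : Y ∈ w.wGE m) (hnm : n < m)
    (f : X ⟶ Y) : f = 0 := by
  obtain ⟨A, hA, ⟨e₁⟩⟩ := hX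
  obtain ⟨B, hB, ⟨e₂⟩⟩ := w.wGE_antitone (Int.add_one_le_iff.mpr hnm) hY
  let e₃ := e₂ ≪≫ (shiftFunctorAdd' C 1 n (n + 1) (add_comm 1 n)).app B
  obtain ⟨g, hg⟩ := (shiftFunctor C n).map_surjective (e₁.inv ≫ f ≫ e₃.hom)
  rw [w.orth A _ hA (shift_mem_shiftedSet hB 1) g, Functor.map_zero] at hg
  simpa using congrArg (fun g => e₁.hom ≫ g ≫ e₃.inv) hg.symm

lemma exists_triangle (n : ℤ) (Y : C) : ∃ (A B : C) (a : A ⟶ Y) (b : Y ⟶ B)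
    (δ : B ⟶ A⟦(1 : ℤ)⟧),
      Triangle.mk a b δ ∈ distTriang C ∧ A ∈ w.wLE n ∧ B ∈ w.wGE (n + 1) := by
  obtain ⟨A, B, a, b, δ, hT, hA, hB⟩ := w.exists_wf (Y⟦-n⟧)
  let T := (Triangle.shiftFunctor C n).obj (Triangle.mk a b δ)
  let e : T.obj₂ ≅ Y := (shiftFunctorCompIsoId C (-n) n (by omega)).app Y
  have hT' : Triangle.mk (T.mor₁ ≫ e.hom) (e.inv ≫ T.mor₂) T.mor₃ ∈ distTriang C :=
    isomorphic_distinguished T (Triangle.shift_distinguished _ hT n) _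
      (Triangle.isoMk _ T (Iso.refl _) e.symm (Iso.refl _)
        (by simp [Triangle.mk]) (by simp [Triangle.mk]) (by simp [Triangle.mk]))
  refine ⟨_, _, _, _, _, hT', shift_mem_shiftedSet hA n, ?_⟩
  rw [add_comm]
  exact w.shift_mem_wGE hB n

lemma mem_wGE_of_forall_hom_eq_zero {n : ℤ} {Y : C}
    (h : ∀ X ∈ w.wLE (n - 1), ∀ f : X ⟶ Y, f = 0) : Y ∈ w.wGE n := by
  obtain ⟨A, B, a, b, δ, hT, hA, hB⟩ := w.exists_triangle (n - 1) Y
  obtain ⟨r, hr⟩ := Triangle.yoneda_exact₂ _ hT (𝟙 Y) (by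
    change a ≫ 𝟙 Y = 0
    simp [h A hA a])
  simpa using w.mem_wGE_of_retract ⟨b, r, hr.symm⟩ hB

end WeightStructure

/-- For `M` of weights `≥ 0` admitting a weight filtration avoiding weight `1`, the
weight-zero subobject `Gr₀ M := M_{≤ 0}` lies in the heart and is universal among morphisms
from objects of the heart to `M`. -/
theorem gr0_right_adjoint
    {C : Type u} [Category.{v} C] [Preadditive C] [HasZeroObject C]
    [HasShift C ℤ] [∀ n : ℤ, (shiftFunctor C n).Additive] [Pretriangulated C]
    (w : WeightStructure C) (M : C) (hM : M ∈ w.ge)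
    (G B : C) (ι : G ⟶ M) (b : M ⟶ B) (δ : B ⟶ G⟦(1:ℤ)⟧)
    (hT : Triangle.mk ι b δ ∈ distTriang C)
    (hG : G ∈ w.le) (hB : B ∈ w.wGE 2) :
    G ∈ w.heart ∧
      ∀ N : C, N ∈ w.heart → Function.Bijective (fun g : N ⟶ G => g ≫ ι) := by
  have hB₁ : B ∈ w.wGE 1 := w.wGE_antitone (by norm_num) hB
  have hB_shift : B⟦(-1 : ℤ)⟧ ∈ w.wGE 1 := w.shift_mem_wGE hB (-1)
  have hι_inj {n : ℤ} {X : C} (hX : X ∈ w.wLE n) (hn : n ≤ 0) :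
      Function.Injective (fun g : X ⟶ G => g ≫ ι) :=
    Triangle.comp_mor₁_injective hT X fun g => w.hom_eq_zero hX hB_shift (by omega) g
  have hG_ge : G ∈ w.ge := w.mem_wGE_zero_iff.mp <| w.mem_wGE_of_forall_hom_eq_zero
    fun X hX f => hι_inj hX (by omega) <|
      (w.hom_eq_zero hX (w.mem_wGE_zero_iff.mpr hM) (by omega) (f ≫ ι)).trans zero_comp.symm
  refine ⟨⟨hG, hG_ge⟩, fun N hN => ⟨hι_inj (w.mem_wLE_zero hN.1) le_rfl, ?_⟩⟩
  exact Triangle.comp_mor₁_surjective hT N fun g =>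
    w.hom_eq_zero (w.mem_wLE_zero hN.1) hB₁ (by norm_num) g
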